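/- arXiv:1208.1056 — 2 statements merged into one kernel-verified Lean document; each statement's English description precedes it below -/
import Mathlib

section
/- Let 0 < ε < 1/2 and 0 < r ≤ 1. Then for all y ∈ [0, 1/2] with y − ε > 0, M_B(y + ε − rε, y + ε) ≥ M_B(y − ε + rε, y − ε). -/
noncomputable def MB (z θ : ℝ) : ℝ :=
  z * Real.log (θ / z) + (1 - z) * Real.log ((1 - θ) / (1 - z))

/-!
Writing `a = y + ε`, `b = y - ε`, `s = rε`, the claim is `M_B(b + s, b) ≤ M_B(a - s, a)`.
Both sides vanish at `s = 0`. Since `∂M_B(z, θ)/∂z = logit θ - logit z`, the `s`-derivative of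
`M_B(a - s, a) - M_B(b + s, b)` is `logit (a - s) + logit (b + s) - logit a - logit b`, which is
nonnegative for `0 ≤ s ≤ a - b` and `a + b ≤ 1`: clearing logarithms, the two products of odds
differ by `s (a - b - s) (1 - a - b) ≥ 0`.
-/

open Real Set

noncomputable def logit (z : ℝ) : ℝ := log z - log (1 - z)

theorem logit_add_logit_le {a b t : ℝ} (hb : 0 < b) (hab : a + b ≤ 1) (ht₀ : 0 ≤ t)
    (ht : t ≤ a - b) : logit a + logit b ≤ logit (a - t) + logit (b + t) := by
  have ha : 0 < a := by linarith
  have h1a : 0 < 1 - a := by linarith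
  have h1b : 0 < 1 - b := by linarith
  have hat : 0 < a - t := by linarith
  have h1at : 0 < 1 - (a - t) := by linarith
  have hbt : 0 < b + t := by linarith
  have h1bt : 0 < 1 - (b + t) := by linarith
  have hprod : a * b * ((1 - (a - t)) * (1 - (b + t)))
      ≤ (a - t) * (b + t) * ((1 - a) * (1 - b)) := by
    have : (a - t) * (b + t) * ((1 - a) * (1 - b)) - a * b * ((1 - (a - t)) * (1 - (b + t)))
        = t * (a - b - t) * (1 - a - b) := by ring
    nlinarith [mul_nonneg (mul_nonneg ht₀ (sub_nonneg.2 ht)) (sub_nonneg.2 hab)]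
  have hlog := log_le_log (by positivity) hprod
  rw [log_mul (mul_pos ha hb).ne' (mul_pos h1at h1bt).ne', log_mul ha.ne' hb.ne',
    log_mul h1at.ne' h1bt.ne', log_mul (mul_pos hat hbt).ne' (mul_pos h1a h1b).ne',
    log_mul hat.ne' hbt.ne', log_mul h1a.ne' h1b.ne'] at hlog
  simp only [logit]
  linarith

theorem MB_self (θ : ℝ) : MB θ θ = 0 := by
  simp [MB]

theorem MB_eq_of_ne {θ : ℝ} (hθ₀ : θ ≠ 0) (hθ₁ : θ ≠ 1) (z : ℝ) :
    MB z θ = z * log θ - z * log z + ((1 - z) * log (1 - θ) - (1 - z) * log (1 - z)) := by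
  have mul_log_div {u v : ℝ} (hv : v ≠ 0) : u * log (v / u) = u * log v - u * log u := by
    rcases eq_or_ne u 0 with rfl | hu
    · simp
    · rw [log_div hv hu, mul_sub]
  rw [MB, mul_log_div hθ₀, mul_log_div (sub_ne_zero.2 hθ₁.symm)]

theorem hasDerivAt_MB_left {z θ : ℝ} (hz₀ : z ≠ 0) (hz₁ : z ≠ 1) (hθ₀ : θ ≠ 0) (hθ₁ : θ ≠ 1) :
    HasDerivAt (fun z ↦ MB z θ) (logit θ - logit z) z := by
  have h₁ : HasDerivAt (fun z ↦ 1 - z) (-1) z := by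
    simpa using (hasDerivAt_id z).const_sub 1
  have := (((hasDerivAt_id z).mul_const (log θ)).sub (hasDerivAt_mul_log hz₀)).add
    ((h₁.mul_const (log (1 - θ))).sub ((hasDerivAt_mul_log (sub_ne_zero.2 hz₁.symm)).comp z h₁))
  simp only [funext (MB_eq_of_ne hθ₀ hθ₁)]
  exact this.congr_deriv (by simp only [logit]; ring)

theorem MB_add_le_MB_sub {a b s : ℝ} (hb : 0 < b) (hab : a + b ≤ 1) (hs₀ : 0 ≤ s)
    (hs : s ≤ a - b) : MB (b + s) b ≤ MB (a - s) a := by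
  set g : ℝ → ℝ := fun t ↦ MB (a - t) a - MB (b + t) b
  set g' : ℝ → ℝ := fun t ↦ logit (a - t) + logit (b + t) - (logit a + logit b)
  have hg : ∀ t ∈ Icc 0 (a - b), HasDerivAt g (g' t) t := by
    rintro t ⟨ht₀, ht⟩
    have hA := (hasDerivAt_MB_left (z := a - t) (θ := a) (by linarith) (by linarith) (by linarith)
      (by linarith)).comp t ((hasDerivAt_id t).const_sub a)
    have hB := (hasDerivAt_MB_left (z := b + t) (θ := b) (by linarith) (by linarith) (by linarith)
      (by linarith)).comp t ((hasDerivAt_id t).const_add b)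
    exact (hA.sub hB).congr_deriv (by simp only [g']; ring)
  have hmono : MonotoneOn g (Icc 0 (a - b)) :=
    monotoneOn_of_hasDerivWithinAt_nonneg (convex_Icc _ _)
      (fun t ht ↦ (hg t ht).continuousAt.continuousWithinAt)
      (fun t ht ↦ (hg t (interior_subset ht)).hasDerivWithinAt)
      fun t ht ↦ sub_nonneg.2 <|
        logit_add_logit_le hb hab (interior_subset ht).1 (interior_subset ht).2
  have := hmono ⟨le_rfl, by linarith⟩ ⟨hs₀, hs⟩ hs₀
  simpa [g, MB_self, sub_nonneg] using this

theorem mb_upper_ge_lower_general (ε r y : ℝ) (hε0 : 0 < ε)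
    (hr0 : 0 < r) (hr1 : r ≤ 1) (hy : y ≤ 1 / 2)
    (hyε : 0 < y - ε) :
    MB (y + ε - r * ε) (y + ε) ≥ MB (y - ε + r * ε) (y - ε) :=
  MB_add_le_MB_sub hyε (by linarith) (by positivity) (by nlinarith)

/-- For `0 < ε < 1/2`, `0 < r ≤ 1`, and `y ∈ [0, 1/2]` with `y − ε > 0`:
`M_B(y + ε − rε, y + ε) ≥ M_B(y − ε + rε, y − ε)`. -/
theorem mb_upper_ge_lower (ε r y : ℝ) (hε0 : 0 < ε) (hε : ε < 1 / 2)
    (hr0 : 0 < r) (hr1 : r ≤ 1) (hy0 : 0 ≤ y) (hy : y ≤ 1 / 2)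
    (hyε : 0 < y - ε) :
    MB (y + ε - r * ε) (y + ε) ≥ MB (y - ε + r * ε) (y - ε) :=
  mb_upper_ge_lower_general ε r y hε0 hr0 hr1 hy hyε
end

section
/- Let y, r ∈ (0,1] and ε ∈ (0,1) with y < 1 − ε. Then M_B(y(1 + rε)/(1 + ε), y/(1 + ε)) ≥ M_B(y(1 − rε)/(1 − ε), y/(1 − ε)). -/
open Real Set

theorem le_of_deriv_add_deriv_neg_nonneg {f : ℝ → ℝ} {a : ℝ} (ha : 0 ≤ a)
    (hf : ∀ t ∈ Icc (-a) a, DifferentiableAt ℝ f t)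
    (hf' : ∀ t ∈ Ioo 0 a, 0 ≤ deriv f t + deriv f (-t)) :
    f (-a) ≤ f a := by
  have hderiv : ∀ t ∈ Icc 0 a,
      HasDerivAt (fun u => f u - f (-u)) (deriv f t + deriv f (-t)) t := by
    intro t ⟨ht0, hta⟩
    have hpos := (hf t ⟨by linarith, hta⟩).hasDerivAt
    have hneg := (hf (-t) ⟨by linarith, by linarith⟩).hasDerivAt.comp t (hasDerivAt_neg t)
    exact (hpos.sub hneg).congr_deriv (by ring)
  have hmono : MonotoneOn (fun u => f u - f (-u)) (Icc 0 a) := by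
    refine monotoneOn_of_deriv_nonneg (convex_Icc 0 a)
      (fun t ht => (hderiv t ht).continuousAt.continuousWithinAt) (fun t ht => ?_) (fun t ht => ?_)
    all_goals rw [interior_Icc] at ht
    · exact (hderiv t (Ioo_subset_Icc_self ht)).differentiableAt.differentiableWithinAt
    · rw [(hderiv t (Ioo_subset_Icc_self ht)).deriv]
      exact hf' t ht
  have := hmono (left_mem_Icc.mpr ha) (right_mem_Icc.mpr ha) ha
  simp only [neg_zero, sub_self] at this
  linarith

theorem hasDerivAt_MB {z θ : ℝ → ℝ} {z' θ' s : ℝ} (hz : HasDerivAt z z' s)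
    (hθ : HasDerivAt θ θ' s) (hz0 : z s ≠ 0) (hθ0 : θ s ≠ 0) (hz1 : 1 - z s ≠ 0)
    (hθ1 : 1 - θ s ≠ 0) :
    HasDerivAt (fun u => MB (z u) (θ u))
      (z' * (log (θ s / z s) - log ((1 - θ s) / (1 - z s)))
        + θ' * (z s / θ s - (1 - z s) / (1 - θ s))) s := by
  have hlog₁ := (hθ.div hz hz0).log (div_ne_zero hθ0 hz0)
  have hlog₂ := ((hθ.const_sub 1).div (hz.const_sub 1) hz1).log (div_ne_zero hθ1 hz1)
  refine ((hz.mul hlog₁).add ((hz.const_sub 1).mul hlog₂)).congr_deriv ?_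
  simp only [Pi.div_apply]
  field_simp
  ring

theorem log_div_sub_log_div_le {z θ : ℝ} (hz0 : 0 < z) (hθ0 : 0 < θ) (hz1 : z < 1)
    (hθ1 : θ < 1) :
    log (θ / z) - log ((1 - θ) / (1 - z)) ≤ θ * (1 - z) / (z * (1 - θ)) - 1 := by
  have hθz : 0 < θ / z := div_pos hθ0 hz0
  have hθz' : 0 < (1 - θ) / (1 - z) := div_pos (by linarith) (by linarith)
  rw [← log_div hθz.ne' hθz'.ne']
  convert log_le_sub_one_of_pos (div_pos hθz hθz') using 2
  field_simp

noncomputable def mbCurve (y r s : ℝ) : ℝ :=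
  MB (y * (1 + r * s) / (1 + s)) (y / (1 + s))

section mbCurve

variable {y r s : ℝ}

theorem mbCurve_domain (hy : 0 < y) (hr0 : 0 ≤ r) (hr1 : r ≤ 1) (hs : |s| < 1 - y) :
    0 < 1 + s ∧ 0 < 1 + r * s ∧ y < 1 + s ∧ y * (1 + r * s) < 1 + s := by
  obtain ⟨hs₁, hs₂⟩ := abs_lt.mp hs
  have hyr : y * r ≤ 1 := by nlinarith
  refine ⟨by linarith, by nlinarith, by linarith, ?_⟩
  nlinarith [mul_le_mul_of_nonneg_left hr0 hy.le]

theorem mbCurve_args_mem (hy : 0 < y) (hr0 : 0 ≤ r) (hr1 : r ≤ 1) (hs : |s| < 1 - y) :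
    0 < y * (1 + r * s) / (1 + s) ∧ y * (1 + r * s) / (1 + s) < 1 ∧
      0 < y / (1 + s) ∧ y / (1 + s) < 1 := by
  obtain ⟨h1s, h1rs, hθ, hz⟩ := mbCurve_domain hy hr0 hr1 hs
  exact ⟨div_pos (mul_pos hy h1rs) h1s, (div_lt_one h1s).2 hz, div_pos hy h1s,
    (div_lt_one h1s).2 hθ⟩

theorem hasDerivAt_mbCurve (hy : 0 < y) (hr0 : 0 ≤ r) (hr1 : r ≤ 1) (hs : |s| < 1 - y) :
    HasDerivAt (mbCurve y r)
      (y * (r - 1) / (1 + s) ^ 2 *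
          (log (y / (1 + s) / (y * (1 + r * s) / (1 + s)))
            - log ((1 - y / (1 + s)) / (1 - y * (1 + r * s) / (1 + s))))
        + -y / (1 + s) ^ 2 *
          (y * (1 + r * s) / (1 + s) / (y / (1 + s))
            - (1 - y * (1 + r * s) / (1 + s)) / (1 - y / (1 + s)))) s := by
  have h1s := (mbCurve_domain hy hr0 hr1 hs).1
  obtain ⟨hz0, hz1, hθ0, hθ1⟩ := mbCurve_args_mem hy hr0 hr1 hs
  have hden : HasDerivAt (fun u => 1 + u) 1 s := (hasDerivAt_id s).const_add 1
  have hzDeriv :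
      HasDerivAt (fun u => y * (1 + r * u) / (1 + u)) (y * (r - 1) / (1 + s) ^ 2) s := by
    have hnum := (((hasDerivAt_id s).const_mul r).const_add 1).const_mul y
    refine (hnum.div hden h1s.ne').congr_deriv ?_
    simp only [id]
    ring
  have hθDeriv : HasDerivAt (fun u => y / (1 + u)) (-y / (1 + s) ^ 2) s := by
    refine ((hasDerivAt_const s y).div hden h1s.ne').congr_deriv ?_
    ring
  exact hasDerivAt_MB hzDeriv hθDeriv hz0.ne' hθ0.ne' (sub_pos.2 hz1).ne' (sub_pos.2 hθ1).ne'

theorem neg_div_le_deriv_mbCurve (hy : 0 < y) (hr0 : 0 ≤ r) (hr1 : r ≤ 1) (hs : |s| < 1 - y) :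
    -(y * r ^ 2 * s / ((1 + s - y) * (1 + r * s))) ≤ deriv (mbCurve y r) s := by
  obtain ⟨h1s, h1rs, hθ, hz⟩ := mbCurve_domain hy hr0 hr1 hs
  obtain ⟨hz0, hz1, hθ0, hθ1⟩ := mbCurve_args_mem hy hr0 hr1 hs
  rw [(hasDerivAt_mbCurve hy hr0 hr1 hs).deriv]
  have hlog := log_div_sub_log_div_le hz0 hθ0 hz1 hθ1
  have hz' : y * (r - 1) / (1 + s) ^ 2 ≤ 0 :=
    div_nonpos_of_nonpos_of_nonneg (mul_nonpos_of_nonneg_of_nonpos hy.le (by linarith))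
      (by positivity)
  refine le_of_eq_of_le ?_ (add_le_add_left (mul_le_mul_of_nonpos_left hlog hz') _)
  have : 1 + s - y ≠ 0 := (sub_pos.2 hθ).ne'
  have : 1 + s - y * (1 + r * s) ≠ 0 := (sub_pos.2 hz).ne'
  field_simp
  ring

theorem deriv_mbCurve_add_deriv_neg_nonneg (hy : 0 < y) (hr0 : 0 ≤ r) (hr1 : r ≤ 1)
    (hs0 : 0 ≤ s) (hs : s < 1 - y) :
    0 ≤ deriv (mbCurve y r) s + deriv (mbCurve y r) (-s) := by
  have hpos := neg_div_le_deriv_mbCurve hy hr0 hr1 (by rwa [abs_of_nonneg hs0])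
  have hneg := neg_div_le_deriv_mbCurve hy hr0 hr1 (by rwa [abs_neg, abs_of_nonneg hs0])
  have hp : 0 < (1 - s - y) * (1 - r * s) := mul_pos (by linarith) (by nlinarith)
  have hp_le : (1 - s - y) * (1 - r * s) ≤ (1 + s - y) * (1 + r * s) := by
    nlinarith [mul_nonneg (mul_nonneg hr0 hs0) (by linarith : (0 : ℝ) ≤ 1 - y)]
  have key : y * r ^ 2 * s / ((1 + s - y) * (1 + r * s))
      ≤ y * r ^ 2 * s / ((1 - s - y) * (1 - r * s)) :=
    div_le_div_of_nonneg_left (by positivity) hp hp_le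
  have hneg' : -(y * r ^ 2 * -s / ((1 + -s - y) * (1 + r * -s)))
      = y * r ^ 2 * s / ((1 - s - y) * (1 - r * s)) := by
    ring
  linarith

end mbCurve

theorem mb_rel_error_ineq_general (y r ε : ℝ) (hy0 : 0 < y)
    (hr0 : 0 < r) (hr1 : r ≤ 1) (hε0 : 0 < ε)
    (hyε : y < 1 - ε) :
    MB (y * (1 + r * ε) / (1 + ε)) (y / (1 + ε)) ≥
      MB (y * (1 - r * ε) / (1 - ε)) (y / (1 - ε)) := by
  have key := le_of_deriv_add_deriv_neg_nonneg (f := mbCurve y r) hε0.le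
    (fun t ht =>
      (hasDerivAt_mbCurve hy0 hr0.le hr1 ((abs_le.2 ht).trans_lt (by linarith))).differentiableAt)
    (fun t ht => deriv_mbCurve_add_deriv_neg_nonneg hy0 hr0.le hr1 ht.1.le (by linarith [ht.2]))
  simpa only [mbCurve, mul_neg, ← sub_eq_add_neg] using key

/-- For `y, r ∈ (0,1]`, `ε ∈ (0,1)` with `y < 1 − ε`:
`M_B(y(1 + rε)/(1 + ε), y/(1 + ε)) ≥ M_B(y(1 − rε)/(1 − ε), y/(1 − ε))`. -/
theorem mb_rel_error_ineq (y r ε : ℝ) (hy0 : 0 < y) (hy1 : y ≤ 1)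
    (hr0 : 0 < r) (hr1 : r ≤ 1) (hε0 : 0 < ε) (hε1 : ε < 1)
    (hyε : y < 1 - ε) :
    MB (y * (1 + r * ε) / (1 + ε)) (y / (1 + ε)) ≥
      MB (y * (1 - r * ε) / (1 - ε)) (y / (1 - ε)) :=
  mb_rel_error_ineq_general y r ε hy0 hr0 hr1 hε0 hyε
end
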